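/- arXiv:1606.07352 — 2 statements merged into one kernel-verified Lean document; each statement's English description precedes it below -/
import Mathlib

section
/- The non-autonomous composition F(s) = X₂(t−s, X₁(s, X⁽⁰⁾)) has derivative F′(s) = (∂X₂/∂X⁽⁰⁾)(t−s, X₁(s, X⁽⁰⁾)) · (V₁ − V₂)(X₁(s, X⁽⁰⁾)). -/
/-!
Write `X₂ (t - u) = X₂ (t - s) ∘ X₂ (s - u)` (the flow property, from uniqueness of solutions of a
`C¹` field). Then `F = X₂ (t - s) ∘ G` with `G u = X₂ (s - u) (X₁ u X⁰)`, and `G' s = (V₁ - V₂) z`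
for `z = X₁ s X⁰`, because `X₂ σ w - w = σ V₂ z + o(σ)` as `(σ, w) → (0, z)`; the chain rule gives
the formula once every time-`τ` map `X₂ τ` is known to be differentiable.

That is the classical variational argument: for short times, the solution `M` of
`M' = DV₂ (X₂ σ q) ∘ M`, `M 0 = 1` is the derivative of `X₂ σ` at `q`, by Grönwall's inequality
for `X₂ σ w - X₂ σ q - M σ (w - q)`, uniformly for `q` near a given point. By the flow property,
the set of `τ` for which `X₂ τ` is differentiable at a given point is then open and closed in `ℝ`.
-/

open Set Filter Topology Metric
open scoped NNReal

theorem gronwallBound_δ0 (K ε x : ℝ) :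
    gronwallBound 0 K ε x = ε * gronwallBound 0 K 1 x := by
  rcases eq_or_ne K 0 with rfl | hK
  · simp [gronwallBound_K0]
  · simp only [gronwallBound_of_K_ne_0 hK]
    ring

theorem IsCompact.exists_forall_norm_sub_sub_fderiv_le {E F : Type*} [NormedAddCommGroup E]
    [NormedSpace ℝ E] [NormedAddCommGroup F] [NormedSpace ℝ F] {V : E → F} (hV : ContDiff ℝ 1 V)
    {K : Set E} (hK : IsCompact K) {η : ℝ} (hη : 0 < η) :
    ∃ δ > 0, ∀ x ∈ K, ∀ y, ‖y - x‖ < δ → ‖V y - V x - fderiv ℝ V x (y - x)‖ ≤ η * ‖y - x‖ := by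
  have hDV := hV.continuous_fderiv one_ne_zero
  obtain ⟨δ, hδ, hclose⟩ := Metric.mem_uniformity_dist.1 <|
    hK.uniformContinuousAt_of_continuousAt _ (fun x _ => hDV.continuousAt) (dist_mem_uniformity hη)
  refine ⟨δ, hδ, fun x hx y hy => ?_⟩
  refine Convex.norm_image_sub_le_of_norm_hasFDerivWithin_le'
    (fun z _ => ((hV.differentiable one_ne_zero) z).hasFDerivAt.hasFDerivWithinAt)
    (fun z hz => ?_) (convex_ball x δ) (mem_ball_self hδ) (mem_ball_iff_norm.2 hy)
  rw [← dist_eq_norm']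
  exact (hclose (mem_ball'.1 hz) hx).le

theorem exists_eq_forall_mem_Icc_hasDerivWithinAt_clm_apply {F : Type*} [NormedAddCommGroup F]
    [NormedSpace ℝ F] [CompleteSpace F] {A : ℝ → F →L[ℝ] F} {T : ℝ} {L : ℝ≥0}
    (hA : ContinuousOn A (Icc 0 T)) (hAL : ∀ t ∈ Icc 0 T, ‖A t‖₊ ≤ L) (hT : 0 ≤ T)
    (hLT : 2 * L * T ≤ 1) (x₀ : F) :
    ∃ M : ℝ → F, M 0 = x₀ ∧ ∀ t ∈ Icc 0 T, HasDerivWithinAt M (A t (M t)) (Icc 0 T) t := by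
  -- On the ball of radius `‖x₀‖` about `x₀` the field is bounded by `2 L ‖x₀‖`, so Picard-Lindelöf
  -- applies on any interval of length at most `1 / (2 L)`, whatever `x₀` is.
  refine IsPicardLindelof.exists_eq_forall_mem_Icc_hasDerivWithinAt₀ (f := fun t x => A t x)
    (t₀ := ⟨0, left_mem_Icc.2 hT⟩) (x₀ := x₀) (a := ‖x₀‖₊) (L := 2 * L * ‖x₀‖₊) (K := L)
    { lipschitzOnWith := fun t ht => ((A t).lipschitz.weaken (hAL t ht)).lipschitzOnWith
      continuousOn := fun x _ => hA.clm_apply continuousOn_const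
      norm_le := fun t ht x hx => ?_
      mul_max_le := ?_ }
  · have hx : ‖x‖ ≤ 2 * ‖x₀‖ := by
      have := norm_le_norm_add_norm_sub' x x₀
      have := mem_closedBall_iff_norm.1 hx
      simp only [coe_nnnorm] at this
      linarith
    calc ‖A t x‖ ≤ ‖A t‖ * ‖x‖ := (A t).le_opNorm x
      _ ≤ L * (2 * ‖x₀‖) := mul_le_mul (hAL t ht) hx (norm_nonneg _) L.2
      _ = _ := by push_cast; ring
  · simp only [NNReal.coe_mul, coe_nnnorm, sub_zero, sub_self, max_eq_left hT]
    push_cast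
    nlinarith [norm_nonneg x₀]

variable {E : Type*} [NormedAddCommGroup E] [NormedSpace ℝ E]

theorem ODE_solution_unique_of_contDiff_of_mem_Ioo {V : E → E} (hV : ContDiff ℝ 1 V) {f g : ℝ → E}
    {a b t₀ : ℝ} (ht₀ : t₀ ∈ Ioo a b) (hf : ∀ t ∈ Ioo a b, HasDerivAt f (V (f t)) t)
    (hg : ∀ t ∈ Ioo a b, HasDerivAt g (V (g t)) t) (h : f t₀ = g t₀) : EqOn f g (Ioo a b) := by
  have hfc : ∀ t ∈ Ioo a b, ContinuousAt f t := fun t ht => (hf t ht).continuousAt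
  have hgc : ∀ t ∈ Ioo a b, ContinuousAt g t := fun t ht => (hg t ht).continuousAt
  have local_eq : ∀ t ∈ Ioo a b, f t = g t → f =ᶠ[𝓝 t] g := by
    intro t ht heq
    obtain ⟨K, s, hs, hK⟩ := (hV.contDiffAt (x := f t)).exists_lipschitzOnWith
    have hI : ∀ᶠ u in 𝓝 t, u ∈ Ioo a b := Ioo_mem_nhds ht.1 ht.2
    refine ODE_solution_unique_of_eventually (v := fun _ => V) (s := fun _ => s)
      (.of_forall fun _ => hK) ?_ ?_ heq
    · filter_upwards [hI, hfc t ht hs] with u hu hus using ⟨hf u hu, hus⟩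
    · filter_upwards [hI, hgc t ht (heq ▸ hs)] with u hu hus using ⟨hg u hu, hus⟩
  suffices Ioo a b ⊆ {t | f =ᶠ[𝓝 t] g} from fun t ht => (this ht).eq_of_nhds
  refine isPreconnected_Ioo.subset_of_closure_inter_subset isOpen_setOfPred_eventually_nhds
    ⟨t₀, ht₀, local_eq t₀ ht₀ h⟩ ?_
  rintro t ⟨htu, ht⟩
  refine local_eq t ht (by_contra fun hne => ?_)
  obtain ⟨u, hne', hu⟩ := mem_closure_iff_nhds.1 htu _
    (((hfc t ht).sub (hgc t ht)).eventually_ne (sub_ne_zero.2 hne))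
  exact hne' (sub_eq_zero.2 (show f =ᶠ[𝓝 u] g from hu).eq_of_nhds)

structure IsFlow (V : E → E) (X : ℝ → E → E) : Prop where
  zero : ∀ y, X 0 y = y
  hasDerivAt : ∀ t y, HasDerivAt (X · y) (V (X t y)) t

namespace IsFlow

variable {V : E → E} {X : ℝ → E → E}

theorem neg (hX : IsFlow V X) : IsFlow (-V) (fun t => X (-t)) where
  zero y := by simpa using hX.zero y
  hasDerivAt t y := by
    simpa [Function.comp_def] using (hX.hasDerivAt (-t) y).scomp t (hasDerivAt_neg t)

theorem continuous (hX : IsFlow V X) (y : E) : Continuous (X · y) :=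
  continuous_iff_continuousAt.2 fun t => (hX.hasDerivAt t y).continuousAt

theorem add (hX : IsFlow V X) (hV : ContDiff ℝ 1 V) (a b : ℝ) (y : E) :
    X a (X b y) = X (a + b) y := by
  obtain ⟨T, hT⟩ := exists_gt |a|
  have := ODE_solution_unique_of_contDiff_of_mem_Ioo hV (t₀ := 0) (a := -T) (b := T)
    ⟨by linarith [abs_nonneg a], by linarith [abs_nonneg a]⟩
    (fun t _ => hX.hasDerivAt t (X b y))
    (fun t _ => (hX.hasDerivAt (t + b) y).comp_add_const t b) (by simp [hX.zero])
  exact this ⟨by linarith [neg_abs_le a], by linarith [le_abs_self a]⟩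

theorem norm_sub_sub_le_gronwallBound (hX : IsFlow V X) {q w : E} {T κ : ℝ} (hT : 0 ≤ T)
    {L : ℝ≥0} {M : ℝ → E →L[ℝ] E} (hM0 : M 0 = ContinuousLinearMap.id ℝ E)
    (hM : ∀ t ∈ Icc 0 T, HasDerivWithinAt M ((fderiv ℝ V (X t q)).comp (M t)) (Icc 0 T) t)
    (hL : ∀ t ∈ Icc 0 T, ‖fderiv ℝ V (X t q)‖₊ ≤ L)
    (hκ : ∀ t ∈ Icc 0 T,
      ‖V (X t w) - V (X t q) - fderiv ℝ V (X t q) (X t w - X t q)‖ ≤ κ) :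
    ‖X T w - X T q - M T (w - q)‖ ≤ gronwallBound 0 L κ T := by
  set DV := fun t => fderiv ℝ V (X t q)
  have hMc : ContinuousOn M (Icc 0 T) := fun t ht => (hM t ht).continuousWithinAt
  have hderiv : ∀ t ∈ Ico 0 T, HasDerivWithinAt (fun t => X t w - X t q - M t (w - q))
      (V (X t w) - V (X t q) - (DV t).comp (M t) (w - q)) (Ici t) t := fun t ht => by
    have hM' := (hM t (Ico_subset_Icc_self ht)).mono_of_mem_nhdsWithin (Icc_mem_nhdsGE_of_mem ht)
    have h := ((hX.hasDerivAt t w).sub (hX.hasDerivAt t q)).hasDerivWithinAt.sub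
      (hM'.clm_apply (hasDerivWithinAt_const _ _ (w - q)))
    rwa [map_zero, add_zero] at h
  have hbound : ∀ t ∈ Ico 0 T, ‖V (X t w) - V (X t q) - (DV t).comp (M t) (w - q)‖ ≤
      L * ‖X t w - X t q - M t (w - q)‖ + κ := fun t ht => by
    have hsplit : V (X t w) - V (X t q) - (DV t).comp (M t) (w - q) =
        DV t (X t w - X t q - M t (w - q)) + (V (X t w) - V (X t q) - DV t (X t w - X t q)) := by
      simp only [ContinuousLinearMap.comp_apply, map_sub]
      abel
    rw [hsplit]
    refine (norm_add_le _ _).trans (add_le_add ?_ (hκ t (Ico_subset_Icc_self ht)))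
    exact ((DV t).le_opNorm _).trans
      (mul_le_mul_of_nonneg_right (hL t (Ico_subset_Icc_self ht)) (norm_nonneg _))
  simpa using norm_le_gronwallBound_of_norm_deriv_right_le
    (((hX.continuous w).sub (hX.continuous q)).continuousOn.sub
      (hMc.clm_apply continuousOn_const)) hderiv (by simp [hX.zero, hM0]) hbound
    T (right_mem_Icc.2 hT)

theorem hasFDerivAt_of_variational (hX : IsFlow V X) (hV : ContDiff ℝ 1 V) {q : E} {T : ℝ}
    (hT : 0 ≤ T) {L C : ℝ≥0} {M : ℝ → E →L[ℝ] E} (hM0 : M 0 = ContinuousLinearMap.id ℝ E)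
    (hM : ∀ t ∈ Icc 0 T, HasDerivWithinAt M ((fderiv ℝ V (X t q)).comp (M t)) (Icc 0 T) t)
    (hL : ∀ t ∈ Icc 0 T, ‖fderiv ℝ V (X t q)‖₊ ≤ L)
    (hC : ∀ᶠ w in 𝓝 q, ∀ t ∈ Icc 0 T, ‖X t w - X t q‖ ≤ C * ‖w - q‖) :
    HasFDerivAt (X T) (M T) q := by
  refine .of_isLittleO (Asymptotics.isLittleO_iff.2 fun η hη => ?_)
  set g := gronwallBound 0 L 1 T
  have hg : 0 ≤ g := by
    simpa [gronwallBound_x0] using gronwallBound_mono le_rfl zero_le_one L.2 hT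
  set η' := η / (C * g + 1)
  have hK : IsCompact ((X · q) '' Icc 0 T) := isCompact_Icc.image (hX.continuous q)
  obtain ⟨δ, hδ, htaylor⟩ := hK.exists_forall_norm_sub_sub_fderiv_le hV (η := η') (by positivity)
  filter_upwards [hC, ball_mem_nhds q (show 0 < δ / (C + 1) by positivity)] with w hw hwδ
  have hwδ' : C * ‖w - q‖ < δ := by
    rw [mem_ball_iff_norm, lt_div_iff₀ (by positivity)] at hwδ
    nlinarith [norm_nonneg (w - q)]
  have hκ : ∀ t ∈ Icc 0 T, ‖V (X t w) - V (X t q) - fderiv ℝ V (X t q) (X t w - X t q)‖ ≤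
      η' * (C * ‖w - q‖) := fun t ht =>
    (htaylor _ (mem_image_of_mem _ ht) _ ((hw t ht).trans_lt hwδ')).trans
      (mul_le_mul_of_nonneg_left (hw t ht) (by positivity))
  calc ‖X T w - X T q - M T (w - q)‖ ≤ gronwallBound 0 L (η' * (C * ‖w - q‖)) T :=
        hX.norm_sub_sub_le_gronwallBound hT hM0 hM hL hκ
    _ = η * (C * g / (C * g + 1)) * ‖w - q‖ := by rw [gronwallBound_δ0]; ring
    _ ≤ η * ‖w - q‖ := by
        gcongr
        exact mul_le_of_le_one_right hη.le ((div_le_one (by positivity)).2 (by linarith))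

variable [CompleteSpace E]

theorem exists_lipschitzOnWith (hX : IsFlow V X) (hV : ContDiff ℝ 1 V) (p : E) :
    ∃ ε > 0, ∃ r > (0 : ℝ), ∃ C, ∀ t ∈ Icc (-ε) ε, LipschitzOnWith C (X t) (closedBall p r) := by
  obtain ⟨ε, hε, _, r, _, _, hr, hPL⟩ :=
    IsPicardLindelof.of_contDiffAt_one (hV.contDiffAt (x := p))
  obtain ⟨α, hα, C, hC⟩ := (hPL 0).exists_forall_mem_closedBall_eq_hasDerivWithinAt_lipschitzOnWith
  have hε₂ : ∀ t ∈ Icc (-(ε / 2)) (ε / 2), t ∈ Ioo (0 - ε) (0 + ε) := fun t ht =>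
    ⟨by linarith [ht.1], by linarith [ht.2]⟩
  have hXα : ∀ y ∈ closedBall p r, ∀ t ∈ Ioo (0 - ε) (0 + ε), X t y = α y t := by
    intro y hy
    refine ODE_solution_unique_of_contDiff_of_mem_Ioo hV (t₀ := 0) (by simp [hε])
      (fun t _ => hX.hasDerivAt t y) (fun t ht => ?_) (by rw [hX.zero, (hα y hy).1])
    exact (hα y hy).2 t (Ioo_subset_Icc_self ht) |>.hasDerivAt (Icc_mem_nhds ht.1 ht.2)
  refine ⟨ε / 2, by positivity, r, hr, C, fun t ht x hx y hy => ?_⟩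
  rw [hXα x hx t (hε₂ t ht), hXα y hy t (hε₂ t ht)]
  exact hC t (Ioo_subset_Icc_self (hε₂ t ht)) hx hy

theorem continuousAt_uncurry_zero (hX : IsFlow V X) (hV : ContDiff ℝ 1 V) (p : E) :
    ContinuousAt (Function.uncurry X) (0, p) := by
  obtain ⟨ε, hε, r, hr, C, hC⟩ := hX.exists_lipschitzOnWith hV p
  refine (continuousOn_prod_of_continuousOn_lipschitzOnWith' _ C hC
    fun y _ => (hX.continuous y).continuousOn).continuousAt ?_
  exact prod_mem_nhds (Icc_mem_nhds (by linarith) hε) (closedBall_mem_nhds p hr)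

theorem exists_isOpen_lipschitzOnWith_nnnorm_fderiv_le (hX : IsFlow V X) (hV : ContDiff ℝ 1 V)
    (p : E) : ∃ U, IsOpen U ∧ p ∈ U ∧ ∃ h > 0, ∃ C L : ℝ≥0, ∀ t ∈ Icc 0 h,
      LipschitzOnWith C (X t) U ∧ ∀ q ∈ U, ‖fderiv ℝ V (X t q)‖₊ ≤ L := by
  obtain ⟨ε, hε, r, hr, C, hC⟩ := hX.exists_lipschitzOnWith hV p
  have hcont : ContinuousAt (fun x : ℝ × E => ‖fderiv ℝ V (Function.uncurry X x)‖₊) (0, p) :=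
    (continuous_nnnorm.comp (hV.continuous_fderiv one_ne_zero)).continuousAt.comp
      (hX.continuousAt_uncurry_zero hV p)
  obtain ⟨δ, hδ, hδL⟩ :=
    Metric.eventually_nhds_iff.1 (hcont.eventually (gt_mem_nhds (lt_add_one _)))
  refine ⟨ball p (min r δ), isOpen_ball, mem_ball_self (lt_min hr hδ), min ε (δ / 2),
    by positivity, C, ‖fderiv ℝ V (X 0 p)‖₊ + 1, fun t ht => ⟨(hC t ?_).mono ?_,
      fun q hq => (hδL (y := (t, q)) ?_).le⟩⟩
  · have := min_le_left ε (δ / 2)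
    exact ⟨by linarith [ht.1], by linarith [ht.2]⟩
  · exact ball_subset_closedBall.trans (closedBall_subset_closedBall (min_le_left _ _))
  · have := min_le_right ε (δ / 2)
    rw [Prod.dist_eq, max_lt_iff, Real.dist_0_eq_abs, abs_of_nonneg ht.1]
    exact ⟨by linarith [ht.2], (mem_ball.1 hq).trans_le (min_le_right _ _)⟩

theorem exists_nhds_forall_Icc_zero_differentiableAt (hX : IsFlow V X) (hV : ContDiff ℝ 1 V)
    (p : E) : ∃ U ∈ 𝓝 p, ∃ h > 0, ∀ t ∈ Icc 0 h, ∀ q ∈ U, DifferentiableAt ℝ (X t) q := by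
  obtain ⟨U, hUo, hpU, h, hh, C, L, hUh⟩ := hX.exists_isOpen_lipschitzOnWith_nnnorm_fderiv_le hV p
  refine ⟨U, hUo.mem_nhds hpU, min h (1 / (2 * L + 1)), by positivity, fun t ht q hq => ?_⟩
  have hsub : Icc 0 t ⊆ Icc 0 h := Icc_subset_Icc_right (ht.2.trans (min_le_left _ _))
  have hLt : 2 * L * t ≤ 1 := by
    have := ht.2.trans (min_le_right _ _)
    rw [le_div_iff₀ (by positivity)] at this
    nlinarith [ht.1]
  obtain ⟨M, hM0, hM⟩ := exists_eq_forall_mem_Icc_hasDerivWithinAt_clm_apply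
    (A := fun s => ContinuousLinearMap.compL ℝ E E E (fderiv ℝ V (X s q))) (L := L)
    ((ContinuousLinearMap.compL ℝ E E E).continuous.comp
      ((hV.continuous_fderiv one_ne_zero).comp (hX.continuous q))).continuousOn
    (fun s hs => ((ContinuousLinearMap.compL ℝ E E E _).opNNNorm_le_bound _
      fun _ => ContinuousLinearMap.opNNNorm_comp_le _ _).trans ((hUh s (hsub hs)).2 q hq))
    ht.1 hLt (ContinuousLinearMap.id ℝ E)
  refine (hX.hasFDerivAt_of_variational hV ht.1 (C := C) hM0 hM
    (fun s hs => (hUh s (hsub hs)).2 q hq) ?_).differentiableAt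
  filter_upwards [hUo.mem_nhds hq] with w hw s hs
  simpa only [dist_eq_norm] using (hUh s (hsub hs)).1.dist_le_mul w hw q hq

theorem exists_nhds_forall_Icc_differentiableAt (hX : IsFlow V X) (hV : ContDiff ℝ 1 V)
    (p : E) : ∃ U ∈ 𝓝 p, ∃ h > 0, ∀ t ∈ Icc (-h) h, ∀ q ∈ U, DifferentiableAt ℝ (X t) q := by
  obtain ⟨U₁, hU₁, h₁, hh₁, H₁⟩ := hX.exists_nhds_forall_Icc_zero_differentiableAt hV p
  obtain ⟨U₂, hU₂, h₂, hh₂, H₂⟩ := hX.neg.exists_nhds_forall_Icc_zero_differentiableAt hV.neg p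
  refine ⟨U₁ ∩ U₂, inter_mem hU₁ hU₂, min h₁ h₂, lt_min hh₁ hh₂, fun t ht q hq => ?_⟩
  have := min_le_left h₁ h₂
  have := min_le_right h₁ h₂
  rcases le_total 0 t with h0 | h0
  · exact H₁ t ⟨h0, by linarith [ht.2]⟩ q hq.1
  · simpa using H₂ (-t) ⟨by linarith, by linarith [ht.1]⟩ q hq.2

theorem differentiableAt (hX : IsFlow V X) (hV : ContDiff ℝ 1 V) (t : ℝ) (y : E) :
    DifferentiableAt ℝ (X t) y := by
  set D := {t | DifferentiableAt ℝ (X t) y}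
  have hD : ∀ τ ∈ closure D, D ∈ 𝓝 τ := by
    intro τ hτ
    obtain ⟨U, hU, h, hh, H⟩ := hX.exists_nhds_forall_Icc_differentiableAt hV (X τ y)
    have hball : ball τ (h / 2) ∈ 𝓝 τ := ball_mem_nhds τ (by positivity)
    obtain ⟨τ', ⟨hτ'τ, hτ'U⟩, hτ'D⟩ := mem_closure_iff_nhds.1 hτ _
      (inter_mem hball ((hX.continuous y).continuousAt hU))
    filter_upwards [hball] with τ'' hτ''
    have hsplit : X τ'' = X (τ'' - τ') ∘ X τ' := funext fun z => by
      rw [Function.comp_apply, hX.add hV, sub_add_cancel]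
    have hτ''τ' : |τ'' - τ'| ≤ h := by
      rw [mem_ball, Real.dist_eq] at hτ'τ hτ''
      linarith [abs_sub_le τ'' τ τ', abs_sub_comm τ' τ]
    show DifferentiableAt ℝ (X τ'') y
    rw [hsplit]
    exact (H _ (abs_le.1 hτ''τ') _ hτ'U).comp y hτ'D
  have hclopen : IsClopen D :=
    ⟨closure_subset_iff_isClosed.1 fun τ hτ => mem_of_mem_nhds (hD τ hτ),
      isOpen_iff_mem_nhds.2 fun τ hτ => hD τ (subset_closure hτ)⟩
  have h0 : (0 : ℝ) ∈ D := by
    show DifferentiableAt ℝ (X 0) y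
    rw [show X 0 = id from funext hX.zero]
    exact differentiableAt_id
  exact eq_univ_iff_forall.1 (hclopen.eq_univ ⟨0, h0⟩) t

theorem isLittleO_sub_sub_smul (hX : IsFlow V X) (hV : ContDiff ℝ 1 V) (z : E) :
    (fun x : ℝ × E => X x.1 x.2 - x.2 - x.1 • V z) =o[𝓝 (0, z)] Prod.fst := by
  refine Asymptotics.isLittleO_iff.2 fun η hη => ?_
  obtain ⟨δ, hδ, H⟩ := Metric.continuousAt_iff.1
    (hV.continuous.continuousAt.comp (hX.continuousAt_uncurry_zero hV z)) η hη
  filter_upwards [ball_mem_nhds (0, z) hδ] with x hx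
  have hderiv : ∀ σ ∈ uIcc 0 x.1, HasDerivWithinAt (fun σ => X σ x.2 - σ • V z)
      (V (X σ x.2) - V z) (uIcc 0 x.1) σ := fun σ _ =>
    ((hX.hasDerivAt σ x.2).sub (((hasDerivAt_id' σ).smul_const (V z)).congr_deriv
      (one_smul ℝ _))).hasDerivWithinAt
  have hbound : ∀ σ ∈ uIcc 0 x.1, ‖V (X σ x.2) - V z‖ ≤ η := fun σ hσ => by
    have hσ : |σ| ≤ |x.1| := by simpa using abs_sub_left_of_mem_uIcc hσ
    rw [← dist_eq_norm, ← hX.zero z]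
    refine (H (x := (σ, x.2)) ?_).le
    rw [mem_ball, Prod.dist_eq, max_lt_iff, Real.dist_0_eq_abs] at hx
    rw [Prod.dist_eq, max_lt_iff, Real.dist_0_eq_abs]
    exact ⟨hσ.trans_lt hx.1, hx.2⟩
  rw [sub_right_comm]
  simpa [hX.zero] using Convex.norm_image_sub_le_of_norm_hasDerivWithin_le hderiv hbound
    (convex_uIcc 0 x.1) left_mem_uIcc right_mem_uIcc

theorem hasDerivAt_sub_comp (hX : IsFlow V X) (hV : ContDiff ℝ 1 V) {Y : ℝ → E} {y' : E}
    {s : ℝ} (hY : HasDerivAt Y y' s) : HasDerivAt (fun u => X (s - u) (Y u)) (y' - V (Y s)) s := by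
  have hlim : Tendsto (fun u => (s - u, Y u)) (𝓝 s) (𝓝 (0, Y s)) :=
    ((continuous_const.sub continuous_id).tendsto' s 0 (sub_self s)).prodMk_nhds
      hY.continuousAt.tendsto
  have hflow : (fun u => X (s - u) (Y u) - Y u - (s - u) • V (Y s)) =o[𝓝 s] fun u => u - s :=
    ((hX.isLittleO_sub_sub_smul hV (Y s)).comp_tendsto hlim).neg_right.congr
      (fun u => rfl) (fun u => by simp)
  rw [hasDerivAt_iff_isLittleO] at hY ⊢
  refine (hflow.add hY).congr (fun u => ?_) (fun u => by simp)
  simp only [hX.zero, sub_self]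
  module

end IsFlow

theorem deriv_flow_composition_general
    (n : ℕ) (V₁ V₂ : (Fin n → ℝ) → (Fin n → ℝ))
    (hV₂ : ContDiff ℝ 1 V₂)
    (X₁ X₂ : ℝ → (Fin n → ℝ) → (Fin n → ℝ))
    (hX₂0 : ∀ y, X₂ 0 y = y)
    (hX₁ : ∀ s y, HasDerivAt (fun u => X₁ u y) (V₁ (X₁ s y)) s)
    (hX₂ : ∀ s y, HasDerivAt (fun u => X₂ u y) (V₂ (X₂ s y)) s)
    (t : ℝ) (X0 : Fin n → ℝ) (s : ℝ) :
    HasDerivAt (fun u => X₂ (t - u) (X₁ u X0))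
      ((fderiv ℝ (X₂ (t - s)) (X₁ s X0)) (V₁ (X₁ s X0) - V₂ (X₁ s X0))) s := by
  have hX : IsFlow V₂ X₂ := ⟨hX₂0, hX₂⟩
  have hsplit : (fun u => X₂ (t - u) (X₁ u X0)) = X₂ (t - s) ∘ fun u => X₂ (s - u) (X₁ u X0) :=
    funext fun u => by rw [Function.comp_apply, hX.add hV₂, sub_add_sub_cancel]
  rw [hsplit]
  exact (hX.differentiableAt hV₂ (t - s) (X₁ s X0)).hasFDerivAt.comp_hasDerivAt_of_eq s
    (hX.hasDerivAt_sub_comp hV₂ (hX₁ s X0)) (by rw [sub_self, hX.zero])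

/-- Derivative of the non-autonomous composition `F(s) = X₂(t−s, X₁(s, X⁰))`:
`F′(s) = (∂X₂/∂X⁰)(t−s, X₁(s,X⁰)) · (V₁ − V₂)(X₁(s,X⁰))`. -/
theorem deriv_flow_composition
    (n : ℕ) (V₁ V₂ : (Fin n → ℝ) → (Fin n → ℝ))
    (hV₁ : ContDiff ℝ 1 V₁) (hV₂ : ContDiff ℝ 1 V₂)
    (X₁ X₂ : ℝ → (Fin n → ℝ) → (Fin n → ℝ))
    (hX₁0 : ∀ y, X₁ 0 y = y) (hX₂0 : ∀ y, X₂ 0 y = y)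
    (hX₁ : ∀ s y, HasDerivAt (fun u => X₁ u y) (V₁ (X₁ s y)) s)
    (hX₂ : ∀ s y, HasDerivAt (fun u => X₂ u y) (V₂ (X₂ s y)) s)
    (t : ℝ) (ht : 0 < t) (X0 : Fin n → ℝ) (s : ℝ) (hs : s ∈ Set.Icc 0 t) :
    HasDerivAt (fun u => X₂ (t - u) (X₁ u X0))
      ((fderiv ℝ (X₂ (t - s)) (X₁ s X0)) (V₁ (X₁ s X0) - V₂ (X₁ s X0))) s :=
  deriv_flow_composition_general n V₁ V₂ hV₂ X₁ X₂ hX₂0 hX₁ hX₂ t X0 s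
end

section
/- (Uniqueness for the linearized dipole inverse problem) Let m̃ : ℝ² → ℝ² be continuous with compact support contained in a bounded open set Ω ⊂ B_{ρ/2π}, and suppose m̃ = (1/2)∇q̃ for some C¹ function q̃. If for all unit vectors ξ₀ and all z ∈ ℝ with x_e(s) = z ξ₀⊥ − (ρ/2π)ξ₀ + (s/2π)ξ₀, the linearized identity ∫_ℝ [I₂, (τ−s)E(ξ₀); 0, I₂] · (m̃⊥(x_e+ξ₀⊥) − m̃⊥(x_e−ξ₀⊥), m̃(x_e+ξ₀⊥) + m̃(x_e−ξ₀⊥))ᵀ ds = 0 holds, then m̃ ≡ 0. -/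
open Real MeasureTheory

noncomputable section

def perp (u : ℝ × ℝ) : ℝ × ℝ := (u.2, -u.1)

def nsq (u : ℝ × ℝ) : ℝ := u.1 ^ 2 + u.2 ^ 2

def dot (u v : ℝ × ℝ) : ℝ := u.1 * v.1 + u.2 * v.2

def grad (f : ℝ × ℝ → ℝ) (x : ℝ × ℝ) : ℝ × ℝ :=
  (fderiv ℝ f x (1, 0), fderiv ℝ f x (0, 1))

/-- The matrix `E(ξ) = (1/2π)[I₂/|ξ|² − 2 ξ⊗ξ/|ξ|⁴]`, acting on vectors.
For unit `ξ` this is `(1/2π)[I₂ − 2ξ⊗ξ]`. -/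
def Emat (ξ v : ℝ × ℝ) : ℝ × ℝ :=
  (1 / (2 * π)) • ((nsq ξ)⁻¹ • v - (2 * dot ξ v / (nsq ξ) ^ 2) • ξ)

open FourierTransform

/-!
The X-ray transform `xray m ξ z = ∫ m (z • ξ⊥ + s • ξ) ds` vanishes for `|z| ≥ ρ / 2π`, since
`m` is supported in the disc of that radius. The second component of the linearized identity,
after the substitution `s ↦ s / 2π`, reads `xray m ξ (z + 1) + xray m ξ (z - 1) = 0`; stepping
by `2` from far out therefore gives `xray m ≡ 0`. By the Fourier slice theorem (integrate in the
rotated frame `(ξ⊥, ξ)`) the Fourier transform of `ℓ ∘ m` vanishes for every functional `ℓ`,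
and Fourier inversion gives `m = 0`.
-/

def xray {E : Type*} [NormedAddCommGroup E] [NormedSpace ℝ E] (g : ℝ × ℝ → E) (ξ : ℝ × ℝ)
    (z : ℝ) : E :=
  ∫ s : ℝ, g (z • perp ξ + s • ξ)

lemma ne_zero_of_nsq_eq_one {ξ : ℝ × ℝ} (hξ : nsq ξ = 1) : ξ ≠ 0 := by
  rintro rfl; norm_num [nsq] at hξ

lemma nsq_pos {w : ℝ × ℝ} (hw : w ≠ 0) : 0 < nsq w := by
  rcases w with ⟨a, b⟩
  have : a ≠ 0 ∨ b ≠ 0 := by contrapose! hw; simp [hw]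
  unfold nsq
  rcases this with h | h <;> positivity

lemma nsq_smul_perp_add_smul (ξ : ℝ × ℝ) (z s : ℝ) :
    nsq (z • perp ξ + s • ξ) = (z ^ 2 + s ^ 2) * nsq ξ := by
  simp only [nsq, perp, Prod.smul_mk, Prod.fst_add, Prod.snd_add, Prod.smul_fst,
    Prod.smul_snd, smul_eq_mul]
  ring

lemma dot_smul_perp_add_smul_smul_perp {ξ : ℝ × ℝ} (hξ : nsq ξ = 1) (z s r : ℝ) :
    dot (z • perp ξ + s • ξ) (r • perp ξ) = z * r := by
  simp only [dot, perp, nsq, Prod.smul_mk, Prod.fst_add, Prod.snd_add, Prod.smul_fst,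
    Prod.smul_snd, smul_eq_mul] at hξ ⊢
  linear_combination z * r * hξ

lemma exists_eq_smul_perp (w : ℝ × ℝ) : ∃ ξ, nsq ξ = 1 ∧ ∃ r : ℝ, w = r • perp ξ := by
  rcases eq_or_ne w 0 with rfl | hw
  · exact ⟨(1, 0), by norm_num [nsq], 0, by simp⟩
  obtain ⟨r, hr, hr2⟩ : ∃ r : ℝ, 0 < r ∧ r ^ 2 = nsq w :=
    ⟨√(nsq w), Real.sqrt_pos.2 (nsq_pos hw), Real.sq_sqrt (nsq_pos hw).le⟩
  refine ⟨r⁻¹ • (-w.2, w.1), ?_, r, ?_⟩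
  · simp only [nsq, Prod.smul_fst, Prod.smul_snd, smul_eq_mul] at hr2 ⊢
    field_simp
    linarith
  · ext <;> simp [perp, hr.ne']

def frame (ξ : ℝ × ℝ) : (ℝ × ℝ) →ₗ[ℝ] ℝ × ℝ :=
  Matrix.toLin (Module.Basis.finTwoProd ℝ) (Module.Basis.finTwoProd ℝ) !![ξ.2, ξ.1; -ξ.1, ξ.2]

lemma frame_apply (ξ p : ℝ × ℝ) : frame ξ p = p.1 • perp ξ + p.2 • ξ := by
  simp only [frame, Matrix.toLin_finTwoProd_apply, perp, Prod.ext_iff]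
  constructor <;> simp <;> ring

lemma det_frame (ξ : ℝ × ℝ) : LinearMap.det (frame ξ) = nsq ξ := by
  rw [frame, LinearMap.det_toLin, Matrix.det_fin_two_of, nsq]; ring

lemma measurePreserving_frame {ξ : ℝ × ℝ} (hξ : nsq ξ = 1) : MeasurePreserving (frame ξ) := by
  refine ⟨(frame ξ).continuous_of_finiteDimensional.measurable, ?_⟩
  rw [Measure.map_linearMap_addHaar_eq_smul_addHaar volume (by simp [det_frame, hξ]), det_frame, hξ]
  simp

lemma integral_eq_integral_xray {E : Type*} [NormedAddCommGroup E] [NormedSpace ℝ E]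
    [CompleteSpace E] {F : ℝ × ℝ → E} (hF : Integrable F) {ξ : ℝ × ℝ} (hξ : nsq ξ = 1) :
    ∫ x, F x = ∫ z, xray F ξ z := by
  have hdet : LinearMap.det (frame ξ) ≠ 0 := by simp [det_frame, hξ]
  have hemb := ((frame ξ).equivOfDetNeZero hdet).toContinuousLinearEquiv.toHomeomorph
    |>.measurableEmbedding
  rw [← (measurePreserving_frame hξ).integral_comp hemb, Measure.volume_eq_prod, integral_prod]
  · simp only [frame_apply, xray]
  · rw [← Measure.volume_eq_prod]
    exact ((measurePreserving_frame hξ).integrable_comp_emb hemb).2 hF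

lemma hasCompactSupport_comp_line {E : Type*} [NormedAddCommGroup E] {g : ℝ × ℝ → E}
    (hgs : HasCompactSupport g) (c : ℝ × ℝ) {v : ℝ × ℝ} (hv : v ≠ 0) :
    HasCompactSupport fun s : ℝ => g (c + s • v) :=
  hgs.comp_isClosedEmbedding ((Homeomorph.addLeft c).isClosedEmbedding.comp
    (isClosedEmbedding_smul_left hv))

lemma integrable_comp_line {E : Type*} [NormedAddCommGroup E] {g : ℝ × ℝ → E}
    (hg : Continuous g) (hgs : HasCompactSupport g) (c : ℝ × ℝ) {v : ℝ × ℝ} (hv : v ≠ 0) :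
    Integrable fun s : ℝ => g (c + s • v) :=
  (hg.comp (by fun_prop)).integrable_of_hasCompactSupport (hasCompactSupport_comp_line hgs c hv)

/-- `ℝ × ℝ` carries the sup norm, so Fourier inversion is applied on `WithLp 2 (ℝ × ℝ)`. -/
lemma eq_zero_of_integral_fourierChar_dot_eq_zero {g : ℝ × ℝ → ℂ} (hg : Continuous g)
    (hgs : HasCompactSupport g) (h : ∀ w, ∫ x, 𝐞 (-dot x w) • g x = 0) : g = 0 := by
  set e := WithLp.prodContinuousLinearEquiv 2 ℝ ℝ ℝ
  set G : WithLp 2 (ℝ × ℝ) → ℂ := g ∘ e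
  have hG : 𝓕 G = 0 := by
    ext w
    rw [Real.fourier_eq, Pi.zero_apply, ← h (WithLp.ofLp w),
      ← (WithLp.volume_preserving_symm_measurableEquiv_toLp_prod ℝ ℝ).integral_comp']
    simp [G, e, WithLp.prod_inner_apply, dot, mul_comm]
  have hGc : Continuous G := hg.comp e.continuous
  have hGi : Integrable G :=
    hGc.integrable_of_hasCompactSupport (hgs.comp_homeomorph e.toHomeomorph)
  have hinv := hGc.fourierInv_fourier_eq hGi (by rw [hG]; exact integrable_zero _ _ _)
  ext x
  simpa [G, hG, Real.fourierInv_eq] using (congrFun hinv (e.symm x)).symm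

lemma xray_fourierChar_smul {g : ℝ × ℝ → ℂ} {ξ : ℝ × ℝ} (hξ : nsq ξ = 1) (r z : ℝ) :
    xray (fun x => 𝐞 (-dot x (r • perp ξ)) • g x) ξ z = 𝐞 (-(z * r)) • xray g ξ z := by
  simp only [xray, dot_smul_perp_add_smul_smul_perp hξ, Circle.smul_def, smul_eq_mul,
    integral_const_mul]

theorem eq_zero_of_xray_eq_zero_complex {g : ℝ × ℝ → ℂ} (hg : Continuous g)
    (hgs : HasCompactSupport g) (h : ∀ ξ, nsq ξ = 1 → ∀ z, xray g ξ z = 0) : g = 0 := by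
  refine eq_zero_of_integral_fourierChar_dot_eq_zero hg hgs fun w => ?_
  obtain ⟨ξ, hξ, r, rfl⟩ := exists_eq_smul_perp w
  have hmod : Integrable fun x => 𝐞 (-dot x (r • perp ξ)) • g x := by
    refine Continuous.integrable_of_hasCompactSupport ?_ hgs.smul_left
    unfold dot; fun_prop
  simp [integral_eq_integral_xray hmod hξ, xray_fourierChar_smul hξ, h ξ hξ]

theorem eq_zero_of_xray_eq_zero {E : Type*} [NormedAddCommGroup E] [NormedSpace ℝ E]
    [CompleteSpace E] {g : ℝ × ℝ → E} (hg : Continuous g) (hgs : HasCompactSupport g)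
    (h : ∀ ξ, nsq ξ = 1 → ∀ z, xray g ξ z = 0) : g = 0 := by
  ext x
  refine SeparatingDual.eq_zero_of_forall_dual_eq_zero (R := ℝ) fun ℓ => ?_
  have hℓ : (fun y => ((ℓ (g y) : ℝ) : ℂ)) = 0 := by
    refine eq_zero_of_xray_eq_zero_complex (by fun_prop)
      (hgs.comp_left (g := fun y => ((ℓ y : ℝ) : ℂ)) (by simp)) ?_
    intro ξ hξ z
    rw [xray, integral_complex_ofReal, ℓ.integral_comp_comm
      (integrable_comp_line hg hgs _ (ne_zero_of_nsq_eq_one hξ)), ← xray, h ξ hξ z]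
    simp
  simpa using congrFun hℓ x

lemma hasCompactSupport_of_tsupport_subset {E : Type*} [NormedAddCommGroup E]
    {g : ℝ × ℝ → E} {R : ℝ} (h : tsupport g ⊆ {x | √(nsq x) < R}) : HasCompactSupport g := by
  refine Metric.isCompact_of_isClosed_isBounded (isClosed_tsupport g)
    ((Metric.isBounded_ball (x := 0) (r := R)).subset fun x hx => ?_)
  have hx : √(nsq x) < R := h hx
  rw [mem_ball_zero_iff, Prod.norm_def, max_lt_iff, Real.norm_eq_abs, Real.norm_eq_abs]
  exact ⟨(Real.abs_le_sqrt (le_add_of_nonneg_right (sq_nonneg _))).trans_lt hx,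
    (Real.abs_le_sqrt (le_add_of_nonneg_left (sq_nonneg _))).trans_lt hx⟩

lemma xray_eq_zero_of_tsupport_subset {E : Type*} [NormedAddCommGroup E] [NormedSpace ℝ E]
    {g : ℝ × ℝ → E} {R : ℝ} (h : tsupport g ⊆ {x | √(nsq x) < R}) {ξ : ℝ × ℝ}
    (hξ : nsq ξ = 1) {z : ℝ} (hz : R ≤ |z|) : xray g ξ z = 0 := by
  have hzero : ∀ s : ℝ, g (z • perp ξ + s • ξ) = 0 := fun s => by
    refine image_eq_zero_of_notMem_tsupport fun hmem => ?_
    have hlt : √(nsq (z • perp ξ + s • ξ)) < R := h hmem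
    refine hlt.not_ge ?_
    calc R ≤ |z| := hz
      _ = √(z ^ 2) := (Real.sqrt_sq_eq_abs z).symm
      _ ≤ √(nsq (z • perp ξ + s • ξ)) := by
        rw [nsq_smul_perp_add_smul, hξ, mul_one]
        exact Real.sqrt_le_sqrt (le_add_of_nonneg_right (sq_nonneg s))
  simp [xray, hzero]

lemma eq_zero_of_add_sub_eq_zero {E : Type*} [AddCommGroup E] {f : ℝ → E} {a R : ℝ}
    (ha : 0 < a) (hrec : ∀ z, f (z + a) + f (z - a) = 0) (hR : ∀ z, R ≤ z → f z = 0) :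
    f = 0 := by
  have hstep : ∀ z, f z = -f (z + 2 * a) := fun z => by
    have := hrec (z + a)
    rw [add_sub_cancel_right, add_assoc, ← two_mul] at this
    exact eq_neg_of_add_eq_zero_right this
  have hn : ∀ n : ℕ, ∀ z, R ≤ z + n * (2 * a) → f z = 0 := by
    intro n
    induction n with
    | zero => simpa using hR
    | succ n ih =>
      intro z hz
      rw [hstep, ih _ (by push_cast at hz; linarith), neg_zero]
  ext z
  obtain ⟨n, hnR⟩ := exists_nat_ge ((R - z) / (2 * a))
  exact hn n z (by rw [div_le_iff₀ (by positivity)] at hnR; linarith)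

lemma integral_comp_line_div {E : Type*} [NormedAddCommGroup E] [NormedSpace ℝ E]
    (g : ℝ × ℝ → E) (ξ : ℝ × ℝ) (z c a : ℝ) :
    ∫ s : ℝ, g (z • perp ξ - c • ξ + (s / a) • ξ) = |a| • xray g ξ z := by
  have harg : ∀ s : ℝ, z • perp ξ - c • ξ + (s / a) • ξ = z • perp ξ + (s / a - c) • ξ :=
    fun s => by module
  simp only [harg]
  rw [Measure.integral_comp_div (fun t => g (z • perp ξ + (t - c) • ξ)),
    integral_sub_right_eq_self (fun t => g (z • perp ξ + t • ξ)), xray]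

lemma xray_add_xray_eq_zero {m : ℝ × ℝ → ℝ × ℝ} (hm : Continuous m) (hms : HasCompactSupport m)
    {ξ : ℝ × ℝ} (hξ : nsq ξ = 1) {a : ℝ} (ha : a ≠ 0) (τ c z : ℝ)
    (h : ∫ s : ℝ,
        (fun xe =>
          ((perp (m (xe + perp ξ)) - perp (m (xe - perp ξ)))
              + (τ - s) • Emat ξ (m (xe + perp ξ) + m (xe - perp ξ)),
            m (xe + perp ξ) + m (xe - perp ξ)))
          (z • perp ξ - c • ξ + (s / a) • ξ) = 0) :
    xray m ξ (z + 1) + xray m ξ (z - 1) = 0 := by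
  set F : ℝ → ℝ → ℝ × ℝ := fun y s => m (y • perp ξ - c • ξ + (s / a) • ξ)
  have hv : a⁻¹ • ξ ≠ 0 := smul_ne_zero (inv_ne_zero ha) (ne_zero_of_nsq_eq_one hξ)
  have hFs : ∀ y, HasCompactSupport (F y) := fun y => by
    simpa only [F, smul_smul, div_eq_mul_inv] using hasCompactSupport_comp_line hms _ hv
  have hFi : ∀ y, Integrable (F y) := fun y => by
    simpa only [F, smul_smul, div_eq_mul_inv] using integrable_comp_line hm hms _ hv
  let P : ℝ → (ℝ × ℝ) × (ℝ × ℝ) := fun s => (perp (F (z + 1) s) - perp (F (z - 1) s)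
      + (τ - s) • Emat ξ (F (z + 1) s + F (z - 1) s), F (z + 1) s + F (z - 1) s)
  have hP : Integrable P := by
    refine Continuous.integrable_of_hasCompactSupport (by unfold P F perp Emat dot nsq; fun_prop)
      (HasCompactSupport.intro ((hFs (z + 1)).union (hFs (z - 1))) fun s hs => ?_)
    rw [Set.mem_union, not_or] at hs
    simp [P, image_eq_zero_of_notMem_tsupport hs.1, image_eq_zero_of_notMem_tsupport hs.2, perp,
      Emat, dot]
  have hP0 : ∫ s, P s = 0 := by
    have hplus : ∀ s : ℝ, z • perp ξ - c • ξ + (s / a) • ξ + perp ξ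
        = (z + 1) • perp ξ - c • ξ + (s / a) • ξ := fun s => by module
    have hminus : ∀ s : ℝ, z • perp ξ - c • ξ + (s / a) • ξ - perp ξ
        = (z - 1) • perp ξ - c • ξ + (s / a) • ξ := fun s => by module
    rw [← h]
    simp only [P, F, hplus, hminus]
  have hsum : ∫ s, (F (z + 1) s + F (z - 1) s) = 0 := by
    simpa [hP0] using (ContinuousLinearMap.snd ℝ (ℝ × ℝ) (ℝ × ℝ)).integral_comp_comm hP
  rw [integral_add (hFi _) (hFi _)] at hsum
  simp only [F, integral_comp_line_div, ← smul_add] at hsum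
  exact (smul_eq_zero.1 hsum).resolve_left (abs_ne_zero.2 ha)

theorem linearized_uniqueness_general
    (ρ τ : ℝ)
    (Ω : Set (ℝ × ℝ))
    (hΩc : closure Ω ⊆ {x : ℝ × ℝ | Real.sqrt (nsq x) < ρ / (2 * π)})
    (m : ℝ × ℝ → ℝ × ℝ) (hmcont : Continuous m) (hsupp : tsupport m ⊆ Ω)
    (hint : ∀ ξ₀ : ℝ × ℝ, nsq ξ₀ = 1 → ∀ z : ℝ,
      (∫ s : ℝ,
        (fun xe =>
          ((perp (m (xe + perp ξ₀)) - perp (m (xe - perp ξ₀)))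
              + (τ - s) • Emat ξ₀ (m (xe + perp ξ₀) + m (xe - perp ξ₀)),
            m (xe + perp ξ₀) + m (xe - perp ξ₀)))
          (z • perp ξ₀ - (ρ / (2 * π)) • ξ₀ + (s / (2 * π)) • ξ₀))
        = (0 : (ℝ × ℝ) × (ℝ × ℝ))) :
    ∀ x, m x = 0 := by
  have hball : tsupport m ⊆ {x | √(nsq x) < ρ / (2 * π)} :=
    hsupp.trans (subset_closure.trans hΩc)
  have hms : HasCompactSupport m := hasCompactSupport_of_tsupport_subset hball
  have hxray : ∀ ξ, nsq ξ = 1 → ∀ z, xray m ξ z = 0 := fun ξ hξ =>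
    congrFun (eq_zero_of_add_sub_eq_zero one_pos
      (xray_add_xray_eq_zero hmcont hms hξ (by positivity) τ _ · (hint ξ hξ _))
      fun z hz => xray_eq_zero_of_tsupport_subset hball hξ (hz.trans (le_abs_self z)))
  exact congrFun (eq_zero_of_xray_eq_zero hmcont hms hxray)

/-- Uniqueness for the linearized dipole inverse problem: if the linearized
Stefanov–Uhlmann identity holds for all unit directions `ξ₀` and all offsets `z`,
then the gradient-type perturbation `m̃` vanishes. -/
theorem linearized_uniqueness
    (ρ τ : ℝ) (hρ : 0 < ρ) (hτ : 0 < τ)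
    (Ω : Set (ℝ × ℝ)) (hΩo : IsOpen Ω) (hΩb : Bornology.IsBounded Ω)
    (hΩc : closure Ω ⊆ {x : ℝ × ℝ | Real.sqrt (nsq x) < ρ / (2 * π)})
    (m : ℝ × ℝ → ℝ × ℝ) (hmcont : Continuous m) (hsupp : tsupport m ⊆ Ω)
    (qt : ℝ × ℝ → ℝ) (hqt : ContDiff ℝ 1 qt)
    (hmq : ∀ x, m x = (1 / 2 : ℝ) • grad qt x)
    (hint : ∀ ξ₀ : ℝ × ℝ, nsq ξ₀ = 1 → ∀ z : ℝ,
      (∫ s : ℝ,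
        (fun xe =>
          ((perp (m (xe + perp ξ₀)) - perp (m (xe - perp ξ₀)))
              + (τ - s) • Emat ξ₀ (m (xe + perp ξ₀) + m (xe - perp ξ₀)),
            m (xe + perp ξ₀) + m (xe - perp ξ₀)))
          (z • perp ξ₀ - (ρ / (2 * π)) • ξ₀ + (s / (2 * π)) • ξ₀))
        = (0 : (ℝ × ℝ) × (ℝ × ℝ))) :
    ∀ x, m x = 0 :=
  linearized_uniqueness_general ρ τ Ω hΩc m hmcont hsupp hint
end
end
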